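/- Let A be a finite nonempty set, X the simplex in ℝ^A, v : X → ℝ^A continuous, and let h be twice continuously differentiable on an open set containing X with Hessian H(y) positive definite for every y ∈ X; for each y ∈ X let V(y) be the H(y)-projection of H(y)⁻¹ v(y) onto TC_X(y). Suppose x* ∈ X is an evolutionarily stable state: there is an open neighborhood W of x* such that v(x)·(x − x*) < 0 for all x ∈ W ∩ X with x ≠ x*. Then x* is asymptotically stable for the dynamics: (a) for every neighborhood U of x* in X there is a neighborhood U' of x* in X such that every solution x(t) = x(0) + ∫₀ᵗ V(x(s)) ds with x(0) ∈ U' satisfies x(t) ∈ U for all t ≥ 0; and (b) there is a neighborhood U₀ of x* in X such that every such solution with x(0) ∈ U₀ converges to x*. -/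

import Mathlib

open Matrix Filter

noncomputable section

/-- The tangent cone `TC_X(x)` of the simplex at `x`. -/
def tcone {A : Type*} [Fintype A] (x : A → ℝ) : Set (A → ℝ) :=
  {z | (∑ α, z α) = 0 ∧ ∀ α, x α = 0 → 0 ≤ z α}

/-- The quadratic form `wᵀ G w = ‖w‖_G²` associated to a matrix `G`. -/
def qform {A : Type*} [Fintype A] (G : Matrix A A ℝ) (w : A → ℝ) : ℝ :=
  w ⬝ᵥ G.mulVec w

/-- `V` is the `G`-projection of `w` onto `C`. -/
def IsGProj {A : Type*} [Fintype A] (G : Matrix A A ℝ) (C : Set (A → ℝ))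
    (w V : A → ℝ) : Prop :=
  V ∈ C ∧ ∀ z ∈ C, qform G (w - V) ≤ qform G (w - z)

/-- The Hessian matrix of `h` at `y`. -/
def hessMat {A : Type*} [Fintype A] [DecidableEq A] (h : (A → ℝ) → ℝ) (y : A → ℝ) :
    Matrix A A ℝ :=
  Matrix.of fun α β => fderiv ℝ (fderiv ℝ h) y (Pi.single α 1) (Pi.single β 1)

/-- A (forward) Carathéodory solution of `ẋ = V(x)` on the simplex. -/
def IsSol {A : Type*} [Fintype A] (V : (A → ℝ) → (A → ℝ)) (x : ℝ → (A → ℝ)) : Prop :=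
  (∀ t : ℝ, 0 ≤ t → x t ∈ stdSimplex ℝ A) ∧ ContinuousOn x (Set.Ici 0) ∧
  (∀ t : ℝ, 0 ≤ t → IntervalIntegrable (fun s => V (x s)) MeasureTheory.volume 0 t) ∧
  ∀ t : ℝ, 0 ≤ t → x t = x 0 + ∫ s in (0:ℝ)..t, V (x s)

/-!
The Bregman divergence `D(y) = h x* - h y - Dh(y) (x* - y)` is a strict Lyapunov function.
It vanishes only at `x*` because the Hessian is positive definite on the simplex. Its derivative
in the direction `V(y)` is `V(y)ᵀ H(y) (y - x*)`; since `x* - y` lies in the tangent cone at `y`,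
the variational inequality of the `H(y)`-projection bounds this by `v(y) ⬝ (y - x*)`, which the
ESS condition makes negative near `x*`. Solutions are only absolutely continuous, so instead of a
chain rule we compare `D` along a solution with its linearization on short time intervals, where
uniform continuity of the derivative of `D` and of the solution keeps the error small.
-/

open MeasureTheory Metric Set

section RealAnalysis

theorem antitoneOn_Icc_of_forall_sub_lt {β : Type*} [Preorder β] {g : ℝ → β} {a b δ : ℝ}
    (hδ : 0 < δ) (hg : ∀ s ∈ Icc a b, ∀ t ∈ Icc a b, s ≤ t → t - s < δ → g t ≤ g s) :
    AntitoneOn g (Icc a b) := by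
  have key : ∀ n : ℕ, ∀ s ∈ Icc a b, ∀ t ∈ Icc a b, s ≤ t → t - s ≤ n * (δ / 2) →
      g t ≤ g s := by
    intro n
    induction n with
    | zero =>
      intro s _ t _ hst hts
      rw [show t = s by simp at hts; linarith]
    | succ n ih =>
      intro s hs t ht hst hts
      by_cases hn : t - s ≤ n * (δ / 2)
      · exact ih s hs t ht hst hn
      · have hm : t - n * (δ / 2) ∈ Icc a b := ⟨by linarith [hs.1], by nlinarith [ht.2]⟩
        push_cast at hts
        have hn0 : 0 ≤ (n : ℝ) * (δ / 2) := by positivity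
        exact (ih _ hm t ht (by linarith) (by linarith)).trans
          (hg s hs _ hm (by linarith) (by linarith))
  intro s hs t ht hst
  obtain ⟨n, hn⟩ := exists_nat_ge ((t - s) / (δ / 2))
  exact key n s hs t ht hst (by rwa [div_le_iff₀ (by positivity)] at hn)

theorem ContinuousOn.exists_eq_forall_le_of_le {g : ℝ → ℝ} {a b r : ℝ} (hab : a ≤ b)
    (hg : ContinuousOn g (Icc a b)) (ha : g a ≤ r) (hb : r ≤ g b) :
    ∃ T ∈ Icc a b, g T = r ∧ ∀ s ∈ Icc a T, g s ≤ r := by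
  have hS : IsClosed (Icc a b ∩ g ⁻¹' {r}) :=
    hg.preimage_isClosed_of_isClosed isClosed_Icc isClosed_singleton
  obtain ⟨T₀, hT₀, hgT₀⟩ := intermediate_value_Icc hab hg ⟨ha, hb⟩
  have hne : (Icc a b ∩ g ⁻¹' {r}).Nonempty := ⟨T₀, hT₀, hgT₀⟩
  have hbdd : BddBelow (Icc a b ∩ g ⁻¹' {r}) := ⟨a, fun s hs => hs.1.1⟩
  obtain ⟨hT, hgT⟩ := hS.csInf_mem hne hbdd
  refine ⟨_, hT, hgT, fun s hs => le_of_not_gt fun hrs => ?_⟩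
  have hsb : s ≤ b := hs.2.trans hT.2
  -- a first crossing before `s` cannot precede the infimum, so it is `s` itself
  obtain ⟨s', hs', hgs'⟩ := intermediate_value_Icc hs.1 (hg.mono (Icc_subset_Icc le_rfl hsb))
    ⟨ha, hrs.le⟩
  have := csInf_le hbdd ⟨⟨hs'.1, hs'.2.trans hsb⟩, hgs'⟩
  have hsT : s = sInf (Icc a b ∩ g ⁻¹' {r}) := le_antisymm hs.2 (this.trans hs'.2)
  rw [hsT, hgT] at hrs
  exact lt_irrefl _ hrs

variable {E : Type*} [NormedAddCommGroup E] [NormedSpace ℝ E] [CompleteSpace E]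
  {Φ : E → ℝ} {Φ' : E → E →L[ℝ] ℝ} {K : Set E} {x f : ℝ → E} {a b c : ℝ}

/-- `Φ'` is frozen at the left endpoint; the error is controlled by the oscillation of `Φ'`. -/
theorem comp_sub_le_mul_sub_add_of_dist_lt (hKc : Convex ℝ K)
    (hΦ : ∀ y ∈ K, HasFDerivAt Φ (Φ' y) y) (hab : a ≤ b) (hxK : ∀ t ∈ Icc a b, x t ∈ K)
    (hf : IntervalIntegrable f volume a b) (hxf : x b - x a = ∫ u in a..b, f u)
    (hc : ∀ s ∈ Icc a b, Φ' (x s) (f s) ≤ c) {ε δ : ℝ}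
    (hΦ'δ : ∀ y ∈ K, ∀ z ∈ K, dist y z < δ → dist (Φ' y) (Φ' z) < ε)
    (hnear : ∀ t ∈ Icc a b, dist (x t) (x a) < δ) :
    Φ (x b) - Φ (x a) ≤ c * (b - a) + 2 * ε * ∫ u in a..b, ‖f u‖ := by
  have ha : a ∈ Icc a b := left_mem_Icc.2 hab
  have hmvt := (hKc.inter (convex_ball (x a) δ)).norm_image_sub_le_of_norm_hasFDerivWithin_le'
    (fun y hy => (hΦ y hy.1).hasFDerivWithinAt)
    (fun y hy => by simpa only [dist_eq_norm] using (hΦ'δ y hy.1 (x a) (hxK a ha) hy.2).le)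
    ⟨hxK a ha, mem_ball_self ((dist_nonneg).trans_lt (hnear a ha))⟩
    ⟨hxK b (right_mem_Icc.2 hab), hnear b (right_mem_Icc.2 hab)⟩
  have hlin : Φ' (x a) (x b - x a) ≤ ∫ u in a..b, (c + ε * ‖f u‖) := by
    rw [hxf, ← (Φ' (x a)).intervalIntegral_comp_comm hf]
    refine intervalIntegral.integral_mono_on hab
      ⟨(Φ' (x a)).integrable_comp hf.1, (Φ' (x a)).integrable_comp hf.2⟩
      (intervalIntegrable_const.add (hf.norm.const_mul _)) fun u hu => ?_
    have hclose : ‖Φ' (x a) - Φ' (x u)‖ ≤ ε := by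
      rw [← dist_eq_norm]
      exact (hΦ'δ _ (hxK a ha) _ (hxK u hu) (by rw [dist_comm]; exact hnear u hu)).le
    calc Φ' (x a) (f u) = Φ' (x u) (f u) + (Φ' (x a) - Φ' (x u)) (f u) := by simp
      _ ≤ c + ε * ‖f u‖ := add_le_add (hc u hu)
        ((le_abs_self _).trans (((Φ' (x a) - Φ' (x u)).le_opNorm _).trans
          (mul_le_mul_of_nonneg_right hclose (norm_nonneg _))))
  have hnorm : ‖x b - x a‖ ≤ ∫ u in a..b, ‖f u‖ :=
    hxf ▸ intervalIntegral.norm_integral_le_integral_norm hab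
  rw [intervalIntegral.integral_add intervalIntegrable_const (hf.norm.const_mul _),
    intervalIntegral.integral_const, intervalIntegral.integral_const_mul, smul_eq_mul] at hlin
  have hmvt' := (le_abs_self _).trans ((Real.norm_eq_abs _).symm.trans_le hmvt)
  have hε : 0 ≤ ε := (dist_nonneg).trans_lt (hΦ'δ _ (hxK a ha) _ (hxK a ha) (hnear a ha)) |>.le
  linarith [mul_le_mul_of_nonneg_left hnorm hε]

theorem comp_sub_le_mul_sub_add_of_eq_integral (hK : IsCompact K) (hKc : Convex ℝ K)
    (hΦ : ∀ y ∈ K, HasFDerivAt Φ (Φ' y) y) (hΦ' : ContinuousOn Φ' K)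
    (hab : a ≤ b) (hx : ContinuousOn x (Icc a b)) (hxK : ∀ t ∈ Icc a b, x t ∈ K)
    (hf : IntervalIntegrable f volume a b)
    (hxf : ∀ s ∈ Icc a b, ∀ t ∈ Icc a b, x t - x s = ∫ u in s..t, f u)
    (hc : ∀ s ∈ Icc a b, Φ' (x s) (f s) ≤ c) {ε : ℝ} (hε : 0 < ε) :
    Φ (x b) - Φ (x a) ≤ c * (b - a) + ε * ∫ u in a..b, ‖f u‖ := by
  obtain ⟨δ₁, hδ₁, hΦ'δ⟩ := Metric.uniformContinuousOn_iff.1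
    (hK.uniformContinuousOn_of_continuous hΦ') (ε / 2) (by positivity)
  obtain ⟨δ, hδ, hxδ⟩ := Metric.uniformContinuousOn_iff.1
    (isCompact_Icc.uniformContinuousOn_of_continuous hx) δ₁ hδ₁
  have hfi : ∀ s ∈ Icc a b, ∀ t ∈ Icc a b, IntervalIntegrable f volume s t := fun s hs t ht =>
    hf.mono_set (uIcc_subset_uIcc (by rwa [uIcc_of_le hab]) (by rwa [uIcc_of_le hab]))
  have hstep : ∀ s ∈ Icc a b, ∀ t ∈ Icc a b, s ≤ t → t - s < δ →
      Φ (x t) - Φ (x s) ≤ c * (t - s) + ε * ∫ u in s..t, ‖f u‖ := by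
    intro s hs t ht hst hts
    have hsub : Icc s t ⊆ Icc a b := Icc_subset_Icc hs.1 ht.2
    have := comp_sub_le_mul_sub_add_of_dist_lt hKc hΦ hst (fun u hu => hxK u (hsub hu))
      (hfi s hs t ht) (hxf s hs t ht) (fun u hu => hc u (hsub hu)) hΦ'δ fun u hu =>
        hxδ u (hsub hu) s hs (by rw [Real.dist_eq, abs_of_nonneg (by linarith [hu.1])]; linarith [hu.2])
    linarith
  have hG := antitoneOn_Icc_of_forall_sub_lt (g := fun t => Φ (x t) - c * t -
    ε * ∫ u in a..t, ‖f u‖) hδ fun s hs t ht hst hts => by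
      have := intervalIntegral.integral_add_adjacent_intervals
        ((hfi a (left_mem_Icc.2 hab) s hs).norm) ((hfi s hs t ht).norm)
      have := hstep s hs t ht hst hts
      nlinarith
  have := hG (left_mem_Icc.2 hab) (right_mem_Icc.2 hab) hab
  simp only [intervalIntegral.integral_same, mul_zero, sub_zero] at this
  linarith

theorem comp_sub_le_mul_sub_of_eq_integral (hK : IsCompact K) (hKc : Convex ℝ K)
    (hΦ : ∀ y ∈ K, HasFDerivAt Φ (Φ' y) y) (hΦ' : ContinuousOn Φ' K)
    (hab : a ≤ b) (hx : ContinuousOn x (Icc a b)) (hxK : ∀ t ∈ Icc a b, x t ∈ K)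
    (hf : IntervalIntegrable f volume a b)
    (hxf : ∀ s ∈ Icc a b, ∀ t ∈ Icc a b, x t - x s = ∫ u in s..t, f u)
    (hc : ∀ s ∈ Icc a b, Φ' (x s) (f s) ≤ c) :
    Φ (x b) - Φ (x a) ≤ c * (b - a) := by
  have hC : 0 ≤ ∫ u in a..b, ‖f u‖ := intervalIntegral.integral_nonneg hab fun _ _ => norm_nonneg _
  refine le_of_forall_pos_le_add fun η hη => ?_
  have hε := comp_sub_le_mul_sub_add_of_eq_integral hK hKc hΦ hΦ' hab hx hxK hf hxf hc
    (ε := η / ((∫ u in a..b, ‖f u‖) + 1)) (by positivity)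
  have : η / ((∫ u in a..b, ‖f u‖) + 1) * ∫ u in a..b, ‖f u‖ ≤ η := by
    rw [div_mul_eq_mul_div, div_le_iff₀ (by positivity)]
    nlinarith
  linarith

end RealAnalysis

section Lyapunov

variable {E : Type*} [MetricSpace E] {K : Set E} {Φ : E → ℝ} {p : E}

theorem IsCompact.exists_inter_preimage_Iio_subset_ball (hK : IsCompact K)
    (hΦ : ContinuousOn Φ K) (hpos : ∀ y ∈ K, y ≠ p → 0 < Φ y) {r : ℝ} (hr : 0 < r) :
    ∃ m > 0, K ∩ Φ ⁻¹' Iio m ⊆ ball p r := by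
  obtain ⟨m, hm, hmΦ⟩ := (hK.diff isOpen_ball).exists_forall_le' (hΦ.mono sdiff_subset)
    fun y hy => hpos y hy.1 fun hyp => hy.2 (by rw [hyp]; exact mem_ball_self hr)
  exact ⟨m, hm, fun y hy => by_contra fun hyr => (hmΦ y ⟨hy.1, hyr⟩).not_gt hy.2⟩

theorem ContinuousWithinAt.exists_pos_forall_lt_of_eq_zero (hΦ : ContinuousWithinAt Φ K p)
    (hΦp : Φ p = 0) {η : ℝ} (hη : 0 < η) : ∃ δ > 0, ∀ y ∈ K, dist y p < δ → Φ y < η := by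
  obtain ⟨δ, hδ, hδη⟩ := Metric.continuousWithinAt_iff.1 hΦ η hη
  refine ⟨δ, hδ, fun y hy hyp => ?_⟩
  have := hδη hy hyp
  rw [hΦp, Real.dist_eq, sub_zero] at this
  exact (le_abs_self _).trans_lt this

theorem lyapunov_stable (hK : IsCompact K) (hΦ : ContinuousOn Φ K) (hp : p ∈ K) (hΦp : Φ p = 0)
    (hpos : ∀ y ∈ K, y ≠ p → 0 < Φ y) {r : ℝ} (hr : 0 < r) (C : Set (ℝ → E))
    (hcont : ∀ x ∈ C, ContinuousOn x (Ici 0)) (hxK : ∀ x ∈ C, ∀ t, 0 ≤ t → x t ∈ K)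
    (hdec : ∀ x ∈ C, ∀ t, 0 ≤ t → (∀ s ∈ Icc 0 t, x s ∈ closedBall p r) → Φ (x t) ≤ Φ (x 0)) :
    ∃ ρ > 0, ∀ x ∈ C, x 0 ∈ ball p ρ → ∀ t, 0 ≤ t → x t ∈ ball p r := by
  obtain ⟨m, hm, hsub⟩ := hK.exists_inter_preimage_Iio_subset_ball hΦ hpos hr
  obtain ⟨ρ, hρ, hρm⟩ := (hΦ p hp).exists_pos_forall_lt_of_eq_zero hΦp hm
  refine ⟨min ρ r, lt_min hρ hr, fun x hx hx0 t ht => by_contra fun hxt => ?_⟩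
  rw [mem_ball] at hx0 hxt
  obtain ⟨T, hT, hTr, hbefore⟩ := ContinuousOn.exists_eq_forall_le_of_le (g := fun s => dist (x s) p)
    ht ((continuous_id.dist continuous_const).comp_continuousOn
      ((hcont x hx).mono Icc_subset_Ici_self)) (hx0.trans_le (min_le_right ρ r)).le (not_lt.1 hxt)
  have hΦ0 : Φ (x 0) < m := hρm _ (hxK x hx 0 le_rfl) (hx0.trans_le (min_le_left ρ r))
  have := hsub ⟨hxK x hx T hT.1,
    (hdec x hx T hT.1 fun s hs => mem_closedBall.2 (hbefore s hs)).trans_lt hΦ0⟩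
  exact (mem_ball.1 this).ne hTr

theorem lyapunov_tendsto (hK : IsCompact K) (hΦ : ContinuousOn Φ K) (hp : p ∈ K)
    (hΦp : Φ p = 0) (hpos : ∀ y ∈ K, y ≠ p → 0 < Φ y) {x : ℝ → E}
    (hxK : ∀ t, 0 ≤ t → x t ∈ K) (hanti : AntitoneOn (fun t => Φ (x t)) (Ici 0))
    (hdecay : ∀ δ > 0, ∃ κ > 0, ∀ t, 0 ≤ t → (∀ s ∈ Icc 0 t, δ ≤ dist (x s) p) →
      Φ (x t) - Φ (x 0) ≤ -κ * t) :
    Tendsto x atTop (nhds p) := by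
  have hΦnonneg : ∀ t, 0 ≤ t → 0 ≤ Φ (x t) := fun t ht => by
    rcases eq_or_ne (x t) p with hxp | hxp
    · rw [hxp, hΦp]
    · exact (hpos _ (hxK t ht) hxp).le
  have hsmall : ∀ η > 0, ∃ T, 0 ≤ T ∧ Φ (x T) < η := by
    intro η hη
    obtain ⟨δ, hδ, hδη⟩ := (hΦ p hp).exists_pos_forall_lt_of_eq_zero hΦp hη
    obtain ⟨κ, hκ, hκdec⟩ := hdecay δ hδ
    by_contra! hbig
    have hT : 0 ≤ (Φ (x 0) + 1) / κ := div_nonneg (by linarith [hΦnonneg 0 le_rfl]) hκ.le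
    have := hκdec _ hT fun s hs =>
      le_of_not_gt fun hsδ => (hbig s hs.1).not_gt (hδη _ (hxK s hs.1) hsδ)
    rw [neg_mul, mul_div_cancel₀ _ hκ.ne'] at this
    linarith [hΦnonneg _ hT]
  refine Metric.tendsto_atTop.2 fun ε hε => ?_
  obtain ⟨m, hm, hsub⟩ := hK.exists_inter_preimage_Iio_subset_ball hΦ hpos hε
  obtain ⟨T, hT, hΦT⟩ := hsmall m hm
  exact ⟨T, fun t ht => hsub ⟨hxK t (hT.trans ht), (hanti hT (hT.trans ht) ht).trans_lt hΦT⟩⟩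

theorem lyapunov_asymptotically_stable {g : E → ℝ} (hK : IsCompact K) (hΦ : ContinuousOn Φ K)
    (hp : p ∈ K) (hΦp : Φ p = 0) (hpos : ∀ y ∈ K, y ≠ p → 0 < Φ y) (hg : ContinuousOn g K)
    {W : Set E} (hW : IsOpen W) (hpW : p ∈ W) (hgW : ∀ y ∈ W ∩ K, y ≠ p → g y < 0)
    (hgp : g p ≤ 0) (C : Set (ℝ → E))
    (hcont : ∀ x ∈ C, ContinuousOn x (Ici 0)) (hxK : ∀ x ∈ C, ∀ t, 0 ≤ t → x t ∈ K)
    (hrate : ∀ x ∈ C, ∀ a b c, 0 ≤ a → a ≤ b → (∀ s ∈ Icc a b, g (x s) ≤ c) →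
      Φ (x b) - Φ (x a) ≤ c * (b - a)) :
    (∀ U₁ : Set E, IsOpen U₁ → p ∈ U₁ →
      ∃ U₂ : Set E, IsOpen U₂ ∧ p ∈ U₂ ∧ ∀ x ∈ C, x 0 ∈ U₂ → ∀ t, 0 ≤ t → x t ∈ U₁) ∧
    ∃ U₀ : Set E, IsOpen U₀ ∧ p ∈ U₀ ∧ ∀ x ∈ C, x 0 ∈ U₀ → Tendsto x atTop (nhds p) := by
  obtain ⟨r₀, hr₀, hr₀W⟩ := nhds_basis_closedBall.mem_iff.1 (hW.mem_nhds hpW)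
  have hanti : ∀ x ∈ C, ∀ a b, 0 ≤ a → a ≤ b → (∀ s ∈ Icc a b, x s ∈ closedBall p r₀) →
      Φ (x b) ≤ Φ (x a) := fun x hx a b ha hab hball => by
    have := hrate x hx a b 0 ha hab fun s hs => by
      rcases eq_or_ne (x s) p with hxp | hxp
      · rwa [hxp]
      · exact (hgW _ ⟨hr₀W (hball s hs), hxK x hx s (ha.trans hs.1)⟩ hxp).le
    linarith
  have hstab : ∀ r, 0 < r → r ≤ r₀ →
      ∃ ρ > 0, ∀ x ∈ C, x 0 ∈ ball p ρ → ∀ t, 0 ≤ t → x t ∈ ball p r := fun r hr hrr₀ =>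
    lyapunov_stable hK hΦ hp hΦp hpos hr C hcont hxK fun x hx t ht hball =>
      hanti x hx 0 t le_rfl ht fun s hs => closedBall_subset_closedBall hrr₀ (hball s hs)
  refine ⟨fun U₁ hU₁ hpU₁ => ?_, ?_⟩
  · obtain ⟨r, hr, hrU₁⟩ := Metric.isOpen_iff.1 hU₁ p hpU₁
    obtain ⟨ρ, hρ, hρr⟩ := hstab (min r r₀) (lt_min hr hr₀) (min_le_right _ _)
    exact ⟨ball p ρ, isOpen_ball, mem_ball_self hρ, fun x hx hx0 t ht =>
      hrU₁ (ball_subset_ball (min_le_left _ _) (hρr x hx hx0 t ht))⟩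
  obtain ⟨ρ, hρ, hρr⟩ := hstab r₀ hr₀ le_rfl
  refine ⟨ball p ρ, isOpen_ball, mem_ball_self hρ, fun x hx hx0 => ?_⟩
  have hxr₀ : ∀ t, 0 ≤ t → x t ∈ closedBall p r₀ := fun t ht =>
    ball_subset_closedBall (hρr x hx hx0 t ht)
  refine lyapunov_tendsto hK hΦ hp hΦp hpos (hxK x hx)
    (fun a ha b hb hab => hanti x hx a b ha hab fun s hs => hxr₀ s (ha.trans hs.1))
    fun δ hδ => ?_
  -- off `ball p δ`, `g` is bounded above by a negative constant
  obtain ⟨κ, hκ, hκg⟩ := ((hK.inter_right isClosed_closedBall).diff isOpen_ball).exists_forall_le'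
    (hg.mono fun y hy => hy.1.1).neg (a := 0) fun y hy => neg_pos.2 <|
      hgW y ⟨hr₀W hy.1.2, hy.1.1⟩ fun hyp => hy.2 (by rw [hyp]; exact mem_ball_self hδ)
  refine ⟨κ, hκ, fun t ht hfar => ?_⟩
  have := hrate x hx 0 t (-κ) le_rfl ht fun s hs => le_neg.1 <|
    hκg (x s) ⟨⟨hxK x hx s hs.1, hxr₀ s hs.1⟩, fun hb => (hfar s hs).not_gt (mem_ball.1 hb)⟩
  rwa [sub_zero] at this

end Lyapunov

section Bregman

variable {E : Type*} [NormedAddCommGroup E] [NormedSpace ℝ E] {h : E → ℝ} {p : E}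

def bregmanDiv (h : E → ℝ) (p y : E) : ℝ :=
  h p - h y - fderiv ℝ h y (p - y)

theorem hasFDerivAt_bregmanDiv {y : E} (hh : ContDiffAt ℝ 2 h y) :
    HasFDerivAt (bregmanDiv h p) ((fderiv ℝ (fderiv ℝ h) y).flip (y - p)) y := by
  have h1 : HasFDerivAt h (fderiv ℝ h y) y := (hh.differentiableAt (by norm_num)).hasFDerivAt
  have h2 : HasFDerivAt (fderiv ℝ h) (fderiv ℝ (fderiv ℝ h) y) y :=
    ((hh.fderiv_right (m := 1) (by norm_num)).differentiableAt (by norm_num)).hasFDerivAt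
  refine (((hasFDerivAt_const (h p) y).sub h1).sub (h2.clm_apply
    ((hasFDerivAt_const p y).sub (hasFDerivAt_id y)))).congr_fderiv
    (ContinuousLinearMap.ext fun u => ?_)
  simp

theorem continuousOn_fderiv_bregmanDiv {U : Set E} (hU : IsOpen U) (hh : ContDiffOn ℝ 2 h U) :
    ContinuousOn (fun y => (fderiv ℝ (fderiv ℝ h) y).flip (y - p)) U :=
  ((ContinuousLinearMap.flipₗᵢ ℝ E E ℝ).continuous.comp_continuousOn
    (((hh.fderiv_of_isOpen hU (m := 1) (by norm_num)).continuousOn_fderiv_of_isOpen hU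
      (by norm_num)))).clm_apply (continuous_id.sub continuous_const).continuousOn

theorem bregmanDiv_pos {S : Set E} (hS : Convex ℝ S) (hp : p ∈ S) {y : E} (hy : y ∈ S)
    (hh : ∀ z ∈ S, ContDiffAt ℝ 2 h z)
    (hpos : ∀ z ∈ S, 0 < fderiv ℝ (fderiv ℝ h) z (y - p) (y - p)) :
    0 < bregmanDiv h p y := by
  have hz : ∀ τ ∈ Icc (0 : ℝ) 1, p + τ • (y - p) ∈ S := fun τ hτ => hS.add_smul_sub_mem hp hy hτ
  have hψ : ∀ τ ∈ Icc (0 : ℝ) 1, HasDerivAt (fun τ : ℝ => bregmanDiv h p (p + τ • (y - p)))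
      (τ * fderiv ℝ (fderiv ℝ h) (p + τ • (y - p)) (y - p) (y - p)) τ := by
    intro τ hτ
    have hline : HasDerivAt (fun τ : ℝ => p + τ • (y - p)) (y - p) τ := by
      simpa using ((hasDerivAt_id τ).smul_const (y - p)).const_add p
    refine ((hasFDerivAt_bregmanDiv (p := p) (hh _ (hz τ hτ))).comp_hasDerivAt τ
      hline).congr_deriv ?_
    rw [ContinuousLinearMap.flip_apply, add_sub_cancel_left, map_smul, smul_eq_mul]
  have hmono := strictMonoOn_of_hasDerivWithinAt_pos (convex_Icc 0 1)
    (fun τ hτ => (hψ τ hτ).continuousAt.continuousWithinAt)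
    (fun τ hτ => (hψ τ (interior_subset hτ)).hasDerivWithinAt)
    (fun τ hτ => by
      rw [interior_Icc] at hτ
      exact mul_pos hτ.1 (hpos _ (hz τ (Ioo_subset_Icc_self hτ))))
  simpa [bregmanDiv] using
    hmono (left_mem_Icc.2 zero_le_one) (right_mem_Icc.2 zero_le_one) zero_lt_one

end Bregman

section HessianDynamics

variable {A : Type*} [Fintype A]

theorem convex_tcone (y : A → ℝ) : Convex ℝ (tcone y) := by
  intro u hu w hw a b ha hb _
  refine ⟨?_, fun α hα => ?_⟩
  · simp [Finset.sum_add_distrib, ← Finset.mul_sum, hu.1, hw.1]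
  · simpa using add_nonneg (mul_nonneg ha (hu.2 α hα)) (mul_nonneg hb (hw.2 α hα))

theorem add_mem_tcone {y u w : A → ℝ} (hu : u ∈ tcone y) (hw : w ∈ tcone y) :
    u + w ∈ tcone y :=
  ⟨by simp [Finset.sum_add_distrib, hu.1, hw.1], fun α hα => add_nonneg (hu.2 α hα) (hw.2 α hα)⟩

theorem sub_mem_tcone {x y : A → ℝ} (hx : x ∈ stdSimplex ℝ A) (hy : y ∈ stdSimplex ℝ A) :
    x - y ∈ tcone y :=
  ⟨by simp [Finset.sum_sub_distrib, hx.2, hy.2], fun α hα => by simpa [hα] using hx.1 α⟩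

theorem Matrix.IsSymm.dotProduct_mulVec_comm {G : Matrix A A ℝ} (hG : G.IsSymm) (u w : A → ℝ) :
    u ⬝ᵥ G *ᵥ w = w ⬝ᵥ G *ᵥ u := by
  rw [dotProduct_mulVec, ← mulVec_transpose, hG.eq, dotProduct_comm]

theorem Matrix.IsSymm.qform_sub_smul {G : Matrix A A ℝ} (hG : G.IsSymm) (a d : A → ℝ) (τ : ℝ) :
    qform G (a - τ • d) = qform G a - 2 * τ * (a ⬝ᵥ G *ᵥ d) + τ ^ 2 * qform G d := by
  simp only [qform, mulVec_sub, mulVec_smul, sub_dotProduct, dotProduct_sub, smul_dotProduct,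
    dotProduct_smul, smul_eq_mul, hG.dotProduct_mulVec_comm d a]
  ring

theorem IsGProj.dotProduct_mulVec_sub_nonpos {G : Matrix A A ℝ} (hG : G.IsSymm)
    {C : Set (A → ℝ)} (hC : Convex ℝ C) {w V z : A → ℝ} (hV : IsGProj G C w V) (hz : z ∈ C) :
    (w - V) ⬝ᵥ G *ᵥ (z - V) ≤ 0 := by
  -- first-order optimality along the segment from `V` towards `z`
  have hseg : ∀ τ ∈ Ioo (0 : ℝ) 1, (w - V) ⬝ᵥ G *ᵥ (z - V) ≤ τ * qform G (z - V) / 2 := by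
    intro τ hτ
    have hmin := hV.2 _ (hC.add_smul_sub_mem hV.1 hz (Ioo_subset_Icc_self hτ))
    rw [show w - (V + τ • (z - V)) = (w - V) - τ • (z - V) by abel,
      hG.qform_sub_smul] at hmin
    nlinarith [hτ.1]
  have hlim : Tendsto (fun τ : ℝ => τ * qform G (z - V) / 2) (nhdsWithin 0 (Ioi 0)) (nhds 0) := by
    simpa using (((continuous_id.mul continuous_const).div_const 2).tendsto (0 : ℝ)).mono_left
      nhdsWithin_le_nhds
  exact ge_of_tendsto hlim (eventually_of_mem (Ioo_mem_nhdsGT one_pos) hseg)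

theorem IsSol.intervalIntegrable {V : (A → ℝ) → A → ℝ} {x : ℝ → A → ℝ} (hx : IsSol V x)
    {s t : ℝ} (hs : 0 ≤ s) (ht : 0 ≤ t) : IntervalIntegrable (fun u => V (x u)) volume s t :=
  (hx.2.2.1 s hs).symm.trans (hx.2.2.1 t ht)

theorem IsSol.sub_eq_integral {V : (A → ℝ) → A → ℝ} {x : ℝ → A → ℝ} (hx : IsSol V x)
    {s t : ℝ} (hs : 0 ≤ s) (ht : 0 ≤ t) : x t - x s = ∫ u in s..t, V (x u) := by
  rw [hx.2.2.2 t ht, hx.2.2.2 s hs, add_sub_add_left_eq_sub,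
    intervalIntegral.integral_interval_sub_left (hx.2.2.1 t ht) (hx.2.2.1 s hs)]

variable [DecidableEq A]

theorem IsGProj.dotProduct_le_of_mem_tcone {G : Matrix A A ℝ} (hG : G.PosDef) {y u V d : A → ℝ}
    (hV : IsGProj G (tcone y) (G⁻¹ *ᵥ u) V) (hd : d ∈ tcone y) :
    u ⬝ᵥ d ≤ V ⬝ᵥ G *ᵥ d := by
  have hsymm : G.IsSymm := isHermitian_iff_isSymm.1 hG.isHermitian
  have := hV.dotProduct_mulVec_sub_nonpos hsymm (convex_tcone y) (add_mem_tcone hV.1 hd)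
  rw [add_sub_cancel_left, sub_dotProduct, hsymm.dotProduct_mulVec_comm, mulVec_mulVec,
    mul_nonsing_inv G (isUnit_iff_ne_zero.2 hG.det_pos.ne'), one_mulVec, dotProduct_comm] at this
  linarith

theorem fderiv_fderiv_apply_eq_dotProduct_hessMat (h : (A → ℝ) → ℝ) (y u w : A → ℝ) :
    fderiv ℝ (fderiv ℝ h) y u w = u ⬝ᵥ hessMat h y *ᵥ w := by
  have : hessMat h y = LinearMap.toMatrix₂' ℝ (fderiv ℝ (fderiv ℝ h) y).toLinearMap₁₂ := rfl
  rw [this, ← Matrix.toLinearMap₂'_apply', Matrix.toLinearMap₂'_toMatrix']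
  rfl

theorem flip_fderiv_fderiv_apply_le_of_isGProj {h : (A → ℝ) → ℝ} {p y u V : A → ℝ}
    (hp : p ∈ stdSimplex ℝ A) (hy : y ∈ stdSimplex ℝ A) (hpd : (hessMat h y).PosDef)
    (hV : IsGProj (hessMat h y) (tcone y) ((hessMat h y)⁻¹ *ᵥ u) V) :
    (fderiv ℝ (fderiv ℝ h) y).flip (y - p) V ≤ u ⬝ᵥ (y - p) := by
  have := hV.dotProduct_le_of_mem_tcone hpd (sub_mem_tcone hp hy)
  rw [ContinuousLinearMap.flip_apply, fderiv_fderiv_apply_eq_dotProduct_hessMat,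
    ← neg_sub p y, mulVec_neg, dotProduct_neg, dotProduct_neg]
  linarith

theorem IsSol.bregmanDiv_sub_le {h : (A → ℝ) → ℝ} {U : Set (A → ℝ)} (hU : IsOpen U)
    (hXU : stdSimplex ℝ A ⊆ U) (hh : ContDiffOn ℝ 2 h U)
    (hpd : ∀ y ∈ stdSimplex ℝ A, (hessMat h y).PosDef) {v V : (A → ℝ) → A → ℝ}
    (hV : ∀ y ∈ stdSimplex ℝ A,
      IsGProj (hessMat h y) (tcone y) ((hessMat h y)⁻¹ *ᵥ v y) (V y))
    {p : A → ℝ} (hp : p ∈ stdSimplex ℝ A) {x : ℝ → A → ℝ} (hx : IsSol V x) {a b c : ℝ}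
    (ha : 0 ≤ a) (hab : a ≤ b) (hc : ∀ s ∈ Icc a b, v (x s) ⬝ᵥ (x s - p) ≤ c) :
    bregmanDiv h p (x b) - bregmanDiv h p (x a) ≤ c * (b - a) :=
  comp_sub_le_mul_sub_of_eq_integral (isCompact_stdSimplex ℝ A) (convex_stdSimplex ℝ A)
    (fun _ hy => hasFDerivAt_bregmanDiv (hh.contDiffAt (hU.mem_nhds (hXU hy))))
    ((continuousOn_fderiv_bregmanDiv hU hh).mono hXU) hab
    (hx.2.1.mono fun _ ht => ha.trans ht.1) (fun t ht => hx.1 t (ha.trans ht.1))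
    (hx.intervalIntegrable ha (ha.trans hab))
    (fun _ hs _ ht => hx.sub_eq_integral (ha.trans hs.1) (ha.trans ht.1))
    fun s hs => (flip_fderiv_fderiv_apply_le_of_isGProj hp (hx.1 s (ha.trans hs.1))
      (hpd _ (hx.1 s (ha.trans hs.1))) (hV _ (hx.1 s (ha.trans hs.1)))).trans (hc s hs)

end HessianDynamics

theorem stmt_11_general {A : Type*} [Fintype A] [DecidableEq A]
    (v : (A → ℝ) → (A → ℝ)) (hvcont : ContinuousOn v (stdSimplex ℝ A))
    (h : (A → ℝ) → ℝ) (U : Set (A → ℝ)) (hU : IsOpen U) (hXU : stdSimplex ℝ A ⊆ U)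
    (hh : ContDiffOn ℝ 2 h U)
    (hpd : ∀ y ∈ stdSimplex ℝ A, (hessMat h y).PosDef)
    (V : (A → ℝ) → (A → ℝ))
    (hV : ∀ y ∈ stdSimplex ℝ A,
      IsGProj (hessMat h y) (tcone y) ((hessMat h y)⁻¹.mulVec (v y)) (V y))
    (xstar : A → ℝ) (hxstarX : xstar ∈ stdSimplex ℝ A)
    (W : Set (A → ℝ)) (hW : IsOpen W) (hxW : xstar ∈ W)
    (hESS : ∀ y ∈ W ∩ stdSimplex ℝ A, y ≠ xstar → v y ⬝ᵥ (y - xstar) < 0) :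
    (∀ U1 : Set (A → ℝ), IsOpen U1 → xstar ∈ U1 →
      ∃ U2 : Set (A → ℝ), IsOpen U2 ∧ xstar ∈ U2 ∧
        ∀ x : ℝ → (A → ℝ), IsSol V x → x 0 ∈ U2 → ∀ t : ℝ, 0 ≤ t → x t ∈ U1) ∧
    (∃ U0 : Set (A → ℝ), IsOpen U0 ∧ xstar ∈ U0 ∧
      ∀ x : ℝ → (A → ℝ), IsSol V x → x 0 ∈ U0 →
        Tendsto (fun t => x t) atTop (nhds xstar)) := by
  have hC2 : ∀ y ∈ stdSimplex ℝ A, ContDiffAt ℝ 2 h y := fun y hy =>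
    hh.contDiffAt (hU.mem_nhds (hXU hy))
  refine lyapunov_asymptotically_stable (isCompact_stdSimplex ℝ A)
    (fun y hy => (hasFDerivAt_bregmanDiv (hC2 y hy)).continuousAt.continuousWithinAt) hxstarX
    (by simp [bregmanDiv]) (fun _ hy hne => ?_) (g := fun y => v y ⬝ᵥ (y - xstar))
    ((continuous_fst.dotProduct continuous_snd).comp_continuousOn
      (hvcont.prodMk (continuousOn_id.sub continuousOn_const))) hW hxW hESS (by simp)
    {x | IsSol V x} (fun _ hx => hx.2.1) (fun _ hx => hx.1)
    fun _ hx _ _ _ ha hab hc => hx.bregmanDiv_sub_le hU hXU hh hpd hV hxstarX ha hab hc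
  refine bregmanDiv_pos (convex_stdSimplex ℝ A) hxstarX hy hC2 fun z hz => ?_
  rw [fderiv_fderiv_apply_eq_dotProduct_hessMat]
  simpa using (hpd z hz).dotProduct_mulVec_pos (sub_ne_zero.2 hne)

/-- asymptotic stability of an ESS under (discontinuous) Hessian dynamics.
If `x*` is an evolutionarily stable state, then (a) it is Lyapunov stable for the dynamics
`ẋ = V(x)` (with `V(y)` the `H(y)`-projection of `H(y)⁻¹ v(y)` onto `TC_X(y)`), and
(b) it attracts all Carathéodory solutions starting in some neighborhood of `x*`. -/
theorem stmt_11 {A : Type*} [Fintype A] [DecidableEq A] [Nonempty A]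
    (v : (A → ℝ) → (A → ℝ)) (hvcont : ContinuousOn v (stdSimplex ℝ A))
    (h : (A → ℝ) → ℝ) (U : Set (A → ℝ)) (hU : IsOpen U) (hXU : stdSimplex ℝ A ⊆ U)
    (hh : ContDiffOn ℝ 2 h U)
    (hpd : ∀ y ∈ stdSimplex ℝ A, (hessMat h y).PosDef)
    (V : (A → ℝ) → (A → ℝ))
    (hV : ∀ y ∈ stdSimplex ℝ A,
      IsGProj (hessMat h y) (tcone y) ((hessMat h y)⁻¹.mulVec (v y)) (V y))
    (xstar : A → ℝ) (hxstarX : xstar ∈ stdSimplex ℝ A)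
    (W : Set (A → ℝ)) (hW : IsOpen W) (hxW : xstar ∈ W)
    (hESS : ∀ y ∈ W ∩ stdSimplex ℝ A, y ≠ xstar → v y ⬝ᵥ (y - xstar) < 0) :
    (∀ U1 : Set (A → ℝ), IsOpen U1 → xstar ∈ U1 →
      ∃ U2 : Set (A → ℝ), IsOpen U2 ∧ xstar ∈ U2 ∧
        ∀ x : ℝ → (A → ℝ), IsSol V x → x 0 ∈ U2 → ∀ t : ℝ, 0 ≤ t → x t ∈ U1) ∧
    (∃ U0 : Set (A → ℝ), IsOpen U0 ∧ xstar ∈ U0 ∧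
      ∀ x : ℝ → (A → ℝ), IsSol V x → x 0 ∈ U0 →
        Tendsto (fun t => x t) atTop (nhds xstar)) :=
  stmt_11_general v hvcont h U hU hXU hh hpd V hV xstar hxstarX W hW hxW hESS
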